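/- arXiv:1909.07939 — 2 statements merged into one kernel-verified Lean document; each statement's English description precedes it below -/
import Mathlib

section
/- Let K ⊂ ℂ be a compact set and p ≥ 1 an integer. Then the function f : ℂ → ℝ defined by f(z) = ∫_K (log |z - w|)^p dλ(w), where λ is Lebesgue measure on ℂ, is continuous. -/
/-!
The integral is the convolution of the kernel `log ‖·‖ ^ p` with the indicator of `K`. For an
integrable kernel such a convolution is continuous: approximate the kernel in `L¹` by continuous
compactly supported functions, whose convolutions with `𝟙_K` are continuous and converge
uniformly. A locally integrable kernel agrees, near any given point and on the translates of `K`
involved, with its restriction to a compact set, which is integrable. Finally `log ‖·‖ ^ p` is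
locally integrable since `|log t| ^ p ≤ (2p) ^ p t ^ (-1/2)` for `0 < t ≤ 1` and `‖x‖ ^ (-1/2)` is
integrable near `0` in dimension at least one.
-/

open Metric

theorem Real.abs_log_pow_le_rpow (p : ℕ) {x : ℝ} (hx₀ : 0 < x) (hx₁ : x ≤ 1) :
    |Real.log x| ^ p ≤ (2 * p) ^ p * x ^ (-(1 / 2) : ℝ) := by
  rcases Nat.eq_zero_or_pos p with rfl | hp
  · simpa using Real.one_le_rpow_of_pos_of_le_one_of_nonpos hx₀ hx₁ (by norm_num)
  have hlog : |Real.log x| * x ^ (1 / (2 * p) : ℝ) ≤ 2 * p := by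
    simpa [abs_mul, abs_of_pos (Real.rpow_pos_of_pos hx₀ _)] using
      (Real.abs_log_mul_self_rpow_lt x (1 / (2 * p)) hx₀ hx₁ (by positivity)).le
  calc |Real.log x| ^ p
      = (|Real.log x| * x ^ (1 / (2 * p) : ℝ)) ^ p * x ^ (-(1 / 2) : ℝ) := by
        rw [mul_pow, ← Real.rpow_natCast (x ^ _), ← Real.rpow_mul hx₀.le, mul_assoc,
          ← Real.rpow_add hx₀, show (1 / (2 * p) : ℝ) * p + -(1 / 2) = 0 by field_simp; ring,
          Real.rpow_zero, mul_one]
    _ ≤ (2 * p) ^ p * x ^ (-(1 / 2) : ℝ) := by gcongr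

namespace MeasureTheory

section

variable {G E : Type*} [NormedAddCommGroup G] [MeasurableSpace G] [BorelSpace G]
  [NormedAddCommGroup E] [NormedSpace ℝ E] {μ : Measure G} {K : Set G}

theorem _root_.HasCompactSupport.continuous_setIntegral_comp_sub [SecondCountableTopology G]
    {g : G → E} (hg : HasCompactSupport g) (hg_cont : Continuous g) (hK : μ K ≠ ⊤) :
    Continuous fun z => ∫ w in K, g (z - w) ∂μ := by
  obtain ⟨C, hC⟩ := hg_cont.bounded_above_of_compact_support hg
  exact continuous_of_dominated
    (fun z => (hg_cont.comp (continuous_const.sub continuous_id)).aestronglyMeasurable)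
    (fun z => ae_of_all _ fun w => hC (z - w)) (integrableOn_const hK)
    (ae_of_all _ fun w => hg_cont.comp (continuous_id.sub continuous_const))

theorem norm_setIntegral_comp_sub_sub_le [μ.IsAddLeftInvariant] [μ.IsNegInvariant]
    {f g : G → E} (hf : Integrable f μ) (hg : Integrable g μ) (z : G) :
    ‖∫ w in K, f (z - w) ∂μ - ∫ w in K, g (z - w) ∂μ‖ ≤ ∫ x, ‖f x - g x‖ ∂μ :=
  calc ‖∫ w in K, f (z - w) ∂μ - ∫ w in K, g (z - w) ∂μ‖
      = ‖∫ w in K, (f (z - w) - g (z - w)) ∂μ‖ := by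
        rw [integral_sub (hf.comp_sub_left z).integrableOn (hg.comp_sub_left z).integrableOn]
    _ ≤ ∫ w in K, ‖f (z - w) - g (z - w)‖ ∂μ := norm_integral_le_integral_norm _
    _ ≤ ∫ w, ‖f (z - w) - g (z - w)‖ ∂μ :=
        setIntegral_le_integral ((hf.sub hg).norm.comp_sub_left z)
          (ae_of_all _ fun _ => norm_nonneg _)
    _ = ∫ x, ‖f x - g x‖ ∂μ := integral_sub_left_eq_self (fun x => ‖f x - g x‖) μ z

variable [SecondCountableTopology G] [LocallyCompactSpace G]
  [μ.IsAddLeftInvariant] [μ.IsNegInvariant] [μ.Regular]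

theorem Integrable.continuous_setIntegral_comp_sub {f : G → E} (hf : Integrable f μ)
    (hK : μ K ≠ ⊤) : Continuous fun z => ∫ w in K, f (z - w) ∂μ := by
  refine continuous_of_uniform_approx_of_continuous fun u hu => ?_
  obtain ⟨ε, hε, hεu⟩ := Metric.mem_uniformity_dist.mp hu
  obtain ⟨g, hg, hfg, hg_cont, hg_int⟩ :=
    hf.exists_hasCompactSupport_integral_sub_le (half_pos hε)
  refine ⟨_, hg.continuous_setIntegral_comp_sub hg_cont hK, fun z => hεu ?_⟩
  rw [dist_eq_norm]
  exact (norm_setIntegral_comp_sub_sub_le hf hg_int z).trans_lt (hfg.trans_lt (half_lt_self hε))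

theorem LocallyIntegrable.continuous_setIntegral_comp_sub {f : G → E}
    (hf : LocallyIntegrable f μ) (hK : IsCompact K) :
    Continuous fun z => ∫ w in K, f (z - w) ∂μ := by
  refine continuous_iff_continuousAt.mpr fun z₀ => ?_
  obtain ⟨B, hB, hB_nhds⟩ := exists_compact_mem_nhds z₀
  set S := (fun x : G × G => x.1 - x.2) '' B ×ˢ K
  have hS : IsCompact S := (hB.prod hK).image continuous_sub
  have hfS : Integrable (S.indicator f) μ :=
    (integrable_indicator_iff hS.measurableSet).mpr (hf.integrableOn_isCompact hS)
  refine ((hfS.continuous_setIntegral_comp_sub hK.measure_ne_top).continuousAt).congr ?_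
  filter_upwards [hB_nhds] with z hz
  refine setIntegral_congr_fun hK.measurableSet fun w hw => ?_
  exact Set.indicator_of_mem (Set.mem_image_of_mem _ (Set.mk_mem_prod hz hw)) f

end

section

variable {E : Type*} [NormedAddCommGroup E] [NormedSpace ℝ E] [FiniteDimensional ℝ E]
  [Nontrivial E] [MeasurableSpace E] [BorelSpace E] {μ : Measure E} [μ.IsAddHaarMeasure]

theorem integrableOn_ball_log_norm_pow (p : ℕ) :
    IntegrableOn (fun x : E => Real.log ‖x‖ ^ p) (ball 0 1) μ := by
  have hd : 1 ≤ Module.finrank ℝ E := Module.finrank_pos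
  have hα : (1 / 2 : ℝ) < Module.finrank ℝ E := by
    have : (1 : ℝ) ≤ Module.finrank ℝ E := by exact_mod_cast hd
    linarith
  refine integrableOn_ball_of_norm_le_rpow (C := (2 * p) ^ p) hd hα ?_
    ((Real.measurable_log.comp measurable_norm).pow_const p).aestronglyMeasurable
  filter_upwards [ae_restrict_mem measurableSet_ball, ae_restrict_of_ae (μ.ae_ne 0)]
    with x hx hx₀
  rw [norm_pow, Real.norm_eq_abs]
  exact Real.abs_log_pow_le_rpow p (norm_pos_iff.mpr hx₀) (mem_ball_zero_iff.mp hx).le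

theorem locallyIntegrable_log_norm_pow (p : ℕ) :
    LocallyIntegrable (fun x : E => Real.log ‖x‖ ^ p) μ := by
  intro x
  rcases eq_or_ne x 0 with rfl | hx
  · exact ⟨ball 0 1, ball_mem_nhds 0 one_pos, integrableOn_ball_log_norm_pow p⟩
  have hcont : ContinuousOn (fun x : E => Real.log ‖x‖ ^ p) {0}ᶜ :=
    (continuous_norm.continuousOn.log fun _ hy => norm_ne_zero_iff.mpr hy).pow p
  simpa [isOpen_compl_singleton.nhdsWithin_eq hx] using
    hcont.integrableAt_nhdsWithin (μ := μ) isOpen_compl_singleton.measurableSet hx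

end

end MeasureTheory

open MeasureTheory

theorem continuous_integral_log_pow_general (K : Set ℂ) (hK : IsCompact K) (p : ℕ) :
    Continuous (fun z : ℂ => ∫ w in K, (Real.log ‖z - w‖) ^ p) :=
  (locallyIntegrable_log_norm_pow p).continuous_setIntegral_comp_sub hK

/-- The function `z ↦ ∫_K (log |z - w|)^p dλ(w)` is continuous for compact `K ⊆ ℂ`. -/
theorem continuous_integral_log_pow (K : Set ℂ) (hK : IsCompact K) (p : ℕ) (hp : 1 ≤ p) :
    Continuous (fun z : ℂ => ∫ w in K, (Real.log ‖z - w‖) ^ p) :=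
  continuous_integral_log_pow_general K hK p
end

section
/- Let K ⊂ ℂ be compact and let μ be a compactly supported probability measure on ℂ that is not supported on any circle centered at a point of K (i.e., there is no r ≥ 0 and z ∈ K with supp(μ) ⊂ {w : |w − z| = r}). Let X be a random variable with law μ. Then there exist p₀, ε₀ ∈ (0, 1/4) such that for every z ∈ K, sup_{r ≥ 0} ℙ(r e^{−ε₀} ≤ |X − z| ≤ r e^{ε₀}) ≤ 1 − p₀. -/
/-!
Argue by contradiction. Otherwise there are `εₙ → 0`, centres `zₙ ∈ K` and radii `rₙ` such that
the annulus `rₙ e^{-εₙ} ≤ |w - zₙ| ≤ rₙ e^{εₙ}` carries mass `> 1 - εₙ`. Such an annulus meets the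
compact support, so the `rₙ` are bounded and a subsequence `(zₙ, rₙ)` converges to some
`(z₀, r₀) ∈ K × [0, ∞)`. Each shell `r₀ - δ ≤ |w - z₀| ≤ r₀ + δ` eventually contains the annuli, so
it has full mass, and so does their intersection, the circle `|w - z₀| = r₀`.
-/

open MeasureTheory Filter Topology Set

section Annulus

variable {E : Type*} [SeminormedAddCommGroup E]

def closedAnnulus (z : E) (a b : ℝ) : Set E := {w | a ≤ ‖w - z‖ ∧ ‖w - z‖ ≤ b}

theorem isClosed_closedAnnulus (z : E) (a b : ℝ) : IsClosed (closedAnnulus z a b) :=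
  have hcont : Continuous fun w : E => ‖w - z‖ := by fun_prop
  (isClosed_le continuous_const hcont).inter (isClosed_le hcont continuous_const)

theorem closedAnnulus_subset_closedAnnulus {z z' : E} {a b a' b' : ℝ}
    (ha : a' ≤ a - ‖z - z'‖) (hb : b + ‖z - z'‖ ≤ b') :
    closedAnnulus z a b ⊆ closedAnnulus z' a' b' := by
  rintro w ⟨haw, hbw⟩
  have h₁ : ‖w - z'‖ ≤ ‖w - z‖ + ‖z - z'‖ := norm_sub_le_norm_sub_add_norm_sub w z z'
  have h₂ : ‖w - z‖ ≤ ‖w - z'‖ + ‖z - z'‖ := by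
    simpa [norm_sub_rev z z'] using norm_sub_le_norm_sub_add_norm_sub w z' z
  exact ⟨by linarith, by linarith⟩

theorem sphere_eq_iInter_closedAnnulus (z : E) (r : ℝ) :
    {w | ‖w - z‖ = r} = ⋂ n : ℕ, closedAnnulus z (r - 1 / (n + 1)) (r + 1 / (n + 1)) := by
  ext w
  simp only [mem_ofPred_eq, mem_iInter, closedAnnulus]
  refine ⟨fun h n => ?_, fun h => le_antisymm ?_ ?_⟩
  · have : (0 : ℝ) < 1 / (n + 1) := Nat.one_div_pos_of_nat
    constructor <;> linarith
  · exact le_of_forall_pos_lt_add fun δ hδ =>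
      let ⟨n, hn⟩ := exists_nat_one_div_lt hδ
      ((h n).2.trans_lt (by linarith))
  · exact le_of_forall_pos_lt_add fun δ hδ =>
      let ⟨n, hn⟩ := exists_nat_one_div_lt hδ
      (by linarith [(h n).1])

variable [MeasurableSpace E] {μ : Measure E}

theorem le_of_measure_closedAnnulus_ne_zero {S : Set E} {z : E} {a b D : ℝ} (hS : μ Sᶜ = 0)
    (hD : ∀ w ∈ S, ‖w - z‖ ≤ D) (h : μ (closedAnnulus z a b) ≠ 0) : a ≤ D := by
  obtain ⟨w, ⟨haw, -⟩, hwS⟩ :=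
    nonempty_of_measure_ne_zero ((measure_inter_conull hS).symm ▸ h)
  exact haw.trans (hD w hwS)

theorem le_mul_exp_one_of_measure_closedAnnulus_ne_zero {S : Set E} {z : E} {r ε b D : ℝ}
    (hS : μ Sᶜ = 0) (hD : ∀ w ∈ S, ‖w - z‖ ≤ D) (hr : 0 ≤ r) (hε : ε ≤ 1)
    (h : μ (closedAnnulus z (r * Real.exp (-ε)) b) ≠ 0) : r ≤ D * Real.exp 1 := by
  have hinner := le_of_measure_closedAnnulus_ne_zero hS hD h
  calc r = r * Real.exp (-ε) * Real.exp ε := by rw [mul_assoc, ← Real.exp_add]; simp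
    _ ≤ D * Real.exp 1 := by
      gcongr
      exact (mul_nonneg hr (Real.exp_pos _).le).trans hinner

variable [OpensMeasurableSpace E] [IsProbabilityMeasure μ]

theorem measure_sphere_eq_one_of_forall_closedAnnulus {z : E} {r : ℝ}
    (h : ∀ δ > 0, μ (closedAnnulus z (r - δ) (r + δ)) = 1) : μ {w | ‖w - z‖ = r} = 1 := by
  have hmeas : ∀ a b, MeasurableSet (closedAnnulus z a b) := fun a b =>
    (isClosed_closedAnnulus z a b).measurableSet
  rw [sphere_eq_iInter_closedAnnulus, ← prob_compl_eq_zero_iff (.iInter fun _ => hmeas _ _),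
    compl_iInter]
  exact measure_iUnion_null fun n =>
    (prob_compl_eq_zero_iff (hmeas _ _)).2 (h _ Nat.one_div_pos_of_nat)

theorem measure_sphere_eq_one_of_tendsto {ι : Type*} {l : Filter ι} [l.NeBot]
    {z : ι → E} {a b : ι → ℝ} {z₀ : E} {r₀ : ℝ}
    (hz : Tendsto z l (𝓝 z₀)) (ha : Tendsto a l (𝓝 r₀)) (hb : Tendsto b l (𝓝 r₀))
    (hμ : Tendsto (fun i => μ (closedAnnulus (z i) (a i) (b i))) l (𝓝 1)) :
    μ {w | ‖w - z₀‖ = r₀} = 1 := by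
  refine measure_sphere_eq_one_of_forall_closedAnnulus fun δ hδ => le_antisymm prob_le_one ?_
  have hdist : Tendsto (fun i => ‖z i - z₀‖) l (𝓝 0) := tendsto_iff_norm_sub_tendsto_zero.1 hz
  have hinner : ∀ᶠ i in l, r₀ - δ ≤ a i - ‖z i - z₀‖ :=
    ((ha.sub hdist).eventually (lt_mem_nhds (by linarith : r₀ - δ < r₀ - 0))).mono
      fun _ => le_of_lt
  have houter : ∀ᶠ i in l, b i + ‖z i - z₀‖ ≤ r₀ + δ :=
    ((hb.add hdist).eventually (gt_mem_nhds (by linarith : r₀ + 0 < r₀ + δ))).mono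
      fun _ => le_of_lt
  refine le_of_tendsto hμ ((hinner.and houter).mono fun i hi => ?_)
  exact measure_mono (closedAnnulus_subset_closedAnnulus hi.1 hi.2)

end Annulus

/-- If the compactly supported probability measure `μ` on `ℂ` is not supported on any
circle centered at a point of the compact set `K`, then there exist `p₀, ε₀ ∈ (0, 1/4)`
such that for every `z ∈ K` and every `r ≥ 0`,
`ℙ(r e^{−ε₀} ≤ |X − z| ≤ r e^{ε₀}) ≤ 1 − p₀`. -/
theorem anticoncentration_annulus (K : Set ℂ) (hK : IsCompact K)
    (μ : Measure ℂ) [IsProbabilityMeasure μ]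
    (hcs : ∃ S : Set ℂ, IsCompact S ∧ μ Sᶜ = 0)
    (hnc : ∀ z ∈ K, ∀ r : ℝ, 0 ≤ r → μ {w : ℂ | ‖w - z‖ = r} ≠ 1) :
    ∃ p₀ ε₀ : ℝ, p₀ ∈ Set.Ioo (0 : ℝ) (1 / 4) ∧ ε₀ ∈ Set.Ioo (0 : ℝ) (1 / 4) ∧
      ∀ z ∈ K, ∀ r : ℝ, 0 ≤ r →
        μ {w : ℂ | r * Real.exp (-ε₀) ≤ ‖w - z‖ ∧
            ‖w - z‖ ≤ r * Real.exp ε₀} ≤ ENNReal.ofReal (1 - p₀) := by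
  by_contra! hcon
  obtain ⟨S, hS, hSμ⟩ := hcs
  obtain ⟨D, hD⟩ := (hS.isBounded.sub hK.isBounded).exists_norm_le
  obtain ⟨ε, -, hε, hε0⟩ := exists_seq_strictAnti_tendsto' (show (0 : ℝ) < 1 / 4 by norm_num)
  choose z hzK r hr hμ using fun n => hcon (ε n) (ε n) (hε n) (hε n)
  have hrD : ∀ n, r n ≤ D * Real.exp 1 := fun n =>
    le_mul_exp_one_of_measure_closedAnnulus_ne_zero hSμ
      (fun w hw => hD _ (sub_mem_sub hw (hzK n))) (hr n) (by linarith [(hε n).2])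
      (zero_le.trans_lt (hμ n)).ne'
  obtain ⟨⟨z₀, r₀⟩, ⟨hz₀, hr₀, -⟩, φ, hφ, hlim⟩ :=
    (hK.prod isCompact_Icc).tendsto_subseq (x := fun n => (z n, r n)) fun n => ⟨hzK n, hr n, hrD n⟩
  rw [nhds_prod_eq, tendsto_prod_iff'] at hlim
  have hεφ : Tendsto (ε ∘ φ) atTop (𝓝 0) := hε0.comp hφ.tendsto_atTop
  have hradius : ∀ s : ℝ, Tendsto (fun n => r (φ n) * Real.exp (s * ε (φ n))) atTop (𝓝 r₀) :=
    fun s => by simpa using hlim.2.mul ((hεφ.const_mul s).rexp)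
  refine hnc z₀ hz₀ r₀ hr₀ (measure_sphere_eq_one_of_tendsto (μ := μ) hlim.1
    (by simpa using hradius (-1)) (by simpa using hradius 1) ?_)
  have hlower : Tendsto (fun n => ENNReal.ofReal (1 - ε (φ n))) atTop (𝓝 1) := by
    simpa using ENNReal.tendsto_ofReal (hεφ.const_sub 1)
  exact tendsto_of_tendsto_of_tendsto_of_le_of_le hlower tendsto_const_nhds
    (fun n => (hμ (φ n)).le) fun _ => prob_le_one
end
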